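/- arXiv:1203.2437 — 5 statements merged into one kernel-verified Lean document; each statement's English description precedes it below -/
import Mathlib

section
/- A permutation π is sorted by one pass of stack-sort, i.e., S(π) is the identity permutation, if and only if π avoids the classical pattern 231. -/
/-- Pop from the stack (top first) all letters smaller than `x`;
returns (popped output, remaining stack). -/
def stackPop (x : ℕ) : List ℕ → List ℕ × List ℕ
  | [] => ([], [])
  | t :: ts =>
    if t < x then
      let p := stackPop x ts
      (t :: p.1, p.2)
    else ([], t :: ts)

/-- Run the stack-sorting procedure with the given stack and input;
at the end the (increasing) stack is flushed to the output. -/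
def stackRun : List ℕ → List ℕ → List ℕ
  | stack, [] => stack
  | stack, x :: xs =>
    let p := stackPop x stack
    p.1 ++ stackRun (x :: p.2) xs

/-- The stack-sort operator: one pass of a permutation (word) through a stack. -/
def S (w : List ℕ) : List ℕ := stackRun [] w

/-- `w` is (the one-line notation of) a permutation of `{1, …, n}`. -/
def IsPermOf (w : List ℕ) (n : ℕ) : Prop := w.Perm (List.range' 1 n)

/-- The identity permutation `1 2 ⋯ n` in one-line notation. -/
def idPerm (n : ℕ) : List ℕ := List.range' 1 n

/-- `w` contains the classical pattern 231. -/
def Contains231 (w : List ℕ) : Prop :=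
  ∃ i j k : Fin w.length, i < j ∧ j < k ∧ w.get k < w.get i ∧ w.get i < w.get j

/-!
During a run the stack is weakly increasing from top to bottom. A letter `b` on the stack is
popped as soon as a larger letter `c` arrives, so if some `a < b` comes later, `a` is output
after `b`; this is the only way the output can fail to be sorted. Hence, from a sorted stack `σ`,
the output is sorted iff the input avoids 231 and no `b ∈ σ` lies strictly between the values of
an inversion `c … a` of the input. The invariant survives a step because pushing `x` turns an
inversion of the remaining input around `x` into a 231 pattern `x c a`.
-/

section

open scoped List

lemma stackPop_eq (x : ℕ) (σ : List ℕ) :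
    stackPop x σ = (σ.takeWhile (· < x), σ.dropWhile (· < x)) := by
  induction σ with
  | nil => rfl
  | cons t ts ih =>
    by_cases h : t < x <;> simp [stackPop, h, ih]

lemma stackRun_cons (σ : List ℕ) (x : ℕ) (xs : List ℕ) :
    stackRun σ (x :: xs) = σ.takeWhile (· < x) ++ stackRun (x :: σ.dropWhile (· < x)) xs := by
  simp [stackRun, stackPop_eq]

lemma stackRun_perm (σ w : List ℕ) : (stackRun σ w).Perm (σ ++ w) := by
  induction w generalizing σ with
  | nil => simp [stackRun]
  | cons x xs ih =>
    rw [stackRun_cons]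
    calc _ ~ σ.takeWhile (· < x) ++ (x :: σ.dropWhile (· < x) ++ xs) := (ih _).append_left _
      _ ~ σ.takeWhile (· < x) ++ σ.dropWhile (· < x) ++ x :: xs := by
          rw [List.append_assoc]
          exact List.perm_middle.symm.append_left _
      _ = σ ++ x :: xs := by rw [List.takeWhile_append_dropWhile]

lemma S_perm (w : List ℕ) : (S w).Perm w := stackRun_perm [] w

lemma lt_of_mem_takeWhile {σ : List ℕ} {x b : ℕ} (hb : b ∈ σ.takeWhile (· < x)) : b < x := by
  simpa using List.mem_takeWhile_imp hb

lemma le_of_mem_dropWhile {σ : List ℕ} {x b : ℕ} (hσ : σ.Pairwise (· ≤ ·))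
    (hb : b ∈ σ.dropWhile (· < x)) : x ≤ b := by
  induction σ with
  | nil => simp at hb
  | cons t ts ih =>
    rw [List.pairwise_cons] at hσ
    by_cases ht : t < x
    · exact ih hσ.2 (by simpa [List.dropWhile_cons, ht] using hb)
    · rcases (by simpa [List.dropWhile_cons, ht] using hb : b = t ∨ b ∈ ts) with rfl | hb
      · omega
      · exact (not_lt.mp ht).trans (hσ.1 b hb)

lemma pairwise_cons_dropWhile {σ : List ℕ} (x : ℕ) (hσ : σ.Pairwise (· ≤ ·)) :
    (x :: σ.dropWhile (· < x)).Pairwise (· ≤ ·) :=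
  List.pairwise_cons.mpr
    ⟨fun _ hb => le_of_mem_dropWhile hσ hb, hσ.sublist (List.dropWhile_sublist _)⟩

lemma contains231_iff_exists_sublist (w : List ℕ) :
    Contains231 w ↔ ∃ b c a, [b, c, a] <+ w ∧ a < b ∧ b < c := by
  constructor
  · rintro ⟨i, j, k, hij, hjk, hab, hbc⟩
    refine ⟨w.get i, w.get j, w.get k, ?_, hab, hbc⟩
    simpa using List.map_getElem_sublist (l := w) (is := [i, j, k])
      (by simp [hij, hjk, hij.trans hjk])
  · rintro ⟨b, c, a, hs, hab, hbc⟩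
    obtain ⟨is, his, hmono⟩ := List.sublist_eq_map_getElem hs
    match is, his with
    | [i, j, k], his =>
      simp only [List.map_cons, List.map_nil, List.cons.injEq] at his
      obtain ⟨rfl, rfl, rfl, -⟩ := his
      simp only [List.pairwise_cons] at hmono
      exact ⟨i, j, k, hmono.1 j (by simp), hmono.2.1 k (by simp), hab, hbc⟩

def InversionAround (b : ℕ) (w : List ℕ) : Prop := ∃ c a, [c, a] <+ w ∧ a < b ∧ b < c

lemma InversionAround.exists_mem_lt {b : ℕ} {w : List ℕ} (h : InversionAround b w) :
    ∃ a ∈ w, a < b :=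
  let ⟨_, a, hs, hab, _⟩ := h
  ⟨a, hs.subset (by simp), hab⟩

lemma inversionAround_cons (b x : ℕ) (xs : List ℕ) :
    InversionAround b (x :: xs) ↔ InversionAround b xs ∨ b < x ∧ ∃ a ∈ xs, a < b := by
  simp only [InversionAround, List.sublist_cons_iff, List.cons.injEq]
  constructor
  · rintro ⟨c, a, hs | ⟨r, ⟨rfl, rfl⟩, ha⟩, hab, hbc⟩
    · exact .inl ⟨c, a, hs, hab, hbc⟩
    · exact .inr ⟨hbc, a, List.singleton_sublist.mp ha, hab⟩
  · rintro (⟨c, a, hs, hab, hbc⟩ | ⟨hbx, a, ha, hab⟩)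
    · exact ⟨c, a, .inl hs, hab, hbc⟩
    · exact ⟨x, a, .inr ⟨[a], ⟨rfl, rfl⟩, List.singleton_sublist.mpr ha⟩, hab, hbx⟩

lemma contains231_cons (x : ℕ) (xs : List ℕ) :
    Contains231 (x :: xs) ↔ Contains231 xs ∨ InversionAround x xs := by
  simp only [contains231_iff_exists_sublist, InversionAround, List.sublist_cons_iff,
    List.cons.injEq]
  constructor
  · rintro ⟨b, c, a, hs | ⟨r, ⟨rfl, rfl⟩, hs⟩, hab, hbc⟩
    · exact .inl ⟨b, c, a, hs, hab, hbc⟩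
    · exact .inr ⟨c, a, hs, hab, hbc⟩
  · rintro (⟨b, c, a, hs, hab, hbc⟩ | ⟨c, a, hs, hab, hbc⟩)
    · exact ⟨b, c, a, .inl hs, hab, hbc⟩
    · exact ⟨x, c, a, .inr ⟨[c, a], ⟨rfl, rfl⟩, hs⟩, hab, hbc⟩

lemma forall_not_inversionAround_cons {σ : List ℕ} (hσ : σ.Pairwise (· ≤ ·)) (x : ℕ)
    (xs : List ℕ) :
    (∀ b ∈ σ, ¬ InversionAround b (x :: xs)) ↔
      (∀ b ∈ σ.dropWhile (· < x), ¬ InversionAround b xs) ∧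
        ∀ b ∈ σ.takeWhile (· < x), ∀ a ∈ xs, b ≤ a := by
  conv_lhs => rw [← List.takeWhile_append_dropWhile (p := (· < x)) (l := σ)]
  rw [List.forall_mem_append, and_comm]
  refine and_congr (forall₂_congr fun b hb => ?_) (forall₂_congr fun b hb => ?_)
  · simp [inversionAround_cons, (le_of_mem_dropWhile hσ hb).not_gt]
  · have hbx := lt_of_mem_takeWhile hb
    rw [inversionAround_cons]
    constructor
    · exact fun h a ha => not_lt.mp fun hab => h (.inr ⟨hbx, a, ha, hab⟩)
    · rintro h (hinv | ⟨-, a, ha, hab⟩)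
      · obtain ⟨a, ha, hab⟩ := hinv.exists_mem_lt
        exact (h a ha).not_gt hab
      · exact (h a ha).not_gt hab

theorem stackRun_pairwise_le_iff {σ : List ℕ} (hσ : σ.Pairwise (· ≤ ·)) (w : List ℕ) :
    (stackRun σ w).Pairwise (· ≤ ·) ↔ ¬ Contains231 w ∧ ∀ b ∈ σ, ¬ InversionAround b w := by
  induction w generalizing σ with
  | nil => simp [stackRun, hσ, contains231_iff_exists_sublist, InversionAround]
  | cons x xs ih =>
    have hcross : (∀ b ∈ σ.takeWhile (· < x),
          ∀ a ∈ stackRun (x :: σ.dropWhile (· < x)) xs, b ≤ a) ↔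
        ∀ b ∈ σ.takeWhile (· < x), ∀ a ∈ xs, b ≤ a := by
      refine forall₂_congr fun b hb => ?_
      have hbx := lt_of_mem_takeWhile hb
      simp only [(stackRun_perm _ xs).mem_iff, List.mem_append, List.mem_cons, or_imp,
        forall_and, forall_eq, hbx.le, true_and]
      exact and_iff_right fun a ha => hbx.le.trans (le_of_mem_dropWhile hσ ha)
    rw [stackRun_cons, List.pairwise_append, ih (pairwise_cons_dropWhile x hσ), hcross,
      contains231_cons, forall_not_inversionAround_cons hσ, List.forall_mem_cons]
    have := hσ.sublist (List.takeWhile_sublist (· < x))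
    tauto

theorem S_pairwise_le_iff (w : List ℕ) : (S w).Pairwise (· ≤ ·) ↔ ¬ Contains231 w := by
  simp [S, stackRun_pairwise_le_iff List.Pairwise.nil]

end

/-- a permutation is stack-sortable iff it avoids 231. -/
theorem stackSortable_iff_avoids_231 (n : ℕ) (w : List ℕ) (hw : IsPermOf w n) :
    S w = idPerm n ↔ ¬ Contains231 w := by
  rw [← S_pairwise_le_iff]
  have hid : (idPerm n).Pairwise (· ≤ ·) := List.pairwise_le_range'
  exact ⟨fun h => h ▸ hid, fun h => ((S_perm w).trans hw).eq_of_pairwise' h hid⟩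
end

section
/- For a permutation π, one pass of bubble-sort yields the identity (B(π) = id) if and only if π avoids both classical patterns 231 and 321. -/
/-- One pass of bubble-sort: iterate left to right, swapping adjacent
entries whenever the left one is larger. -/
def B : List ℕ → List ℕ
  | [] => []
  | [x] => [x]
  | x :: y :: rest => if x ≤ y then x :: B (y :: rest) else y :: B (x :: rest)

/-- `w` contains the classical pattern 321. -/
def Contains321 (w : List ℕ) : Prop :=
  ∃ i j k : Fin w.length, i < j ∧ j < k ∧ w.get j < w.get i ∧ w.get k < w.get j


/-! A pass of bubble sort carries the running maximum to the right:
`B (x :: y :: l) = min x y :: B (max x y :: l)`. Hence `B w` is sorted exactly when no entry of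
`w` is preceded by two larger entries, since the smaller of those two is never carried past it.
As `B w` is a rearrangement of `w`, and `w` of `1 ⋯ n`, being sorted means `B w = idPerm n`.
Finally, for distinct entries, an entry `c` preceded by larger `a` then `b` is an occurrence of
231 (if `a < b`) or of 321 (if `a > b`). -/

theorem List.sublist_triple_iff {α : Type*} {l : List α} {a b c : α} :
    List.Sublist [a, b, c] l ↔ ∃ i j k : Fin l.length, i < j ∧ j < k ∧
      l.get i = a ∧ l.get j = b ∧ l.get k = c := by
  rw [List.sublist_iff_exists_fin_orderEmbedding_get_eq]
  constructor
  · rintro ⟨f, hf⟩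
    exact ⟨f 0, f 1, f 2, f.strictMono (by simp), f.strictMono (by simp [Fin.lt_def]),
      (hf 0).symm, (hf 1).symm, (hf 2).symm⟩
  · rintro ⟨i, j, k, hij, hjk, rfl, rfl, rfl⟩
    have hmono : StrictMono ![i, j, k] := Fin.strictMono_iff_lt_succ.2 <| by
      intro m; fin_cases m <;> simpa
    exact ⟨OrderEmbedding.ofStrictMono _ hmono, fun m => by fin_cases m <;> rfl⟩

theorem B_perm (w : List ℕ) : (B w).Perm w := by
  induction w using B.induct with
  | case1 => simp [B]
  | case2 x => simp [B]
  | case3 x y rest h ih => simpa [B, h] using ih.cons x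
  | case4 x y rest h ih =>
    rw [B, if_neg h]
    exact (ih.cons y).trans (.swap x y rest)

theorem B_cons_cons (x y : ℕ) (rest : List ℕ) :
    B (x :: y :: rest) = min x y :: B (max x y :: rest) := by
  by_cases h : x ≤ y
  · simp [B, h]
  · simp [B, h, (not_le.1 h).le]

def HasTwoLargerBefore (w : List ℕ) : Prop :=
  ∃ a b c : ℕ, c < a ∧ c < b ∧ List.Sublist [a, b, c] w

theorem HasTwoLargerBefore.swap {x y : ℕ} {rest : List ℕ}
    (h : HasTwoLargerBefore (x :: y :: rest)) : HasTwoLargerBefore (y :: x :: rest) := by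
  obtain ⟨a, b, c, hca, hcb, hs⟩ := h
  rcases hs with _ | ⟨_, _ | ⟨_, hs⟩ | ⟨_, hs⟩⟩ | ⟨_, _ | ⟨_, hs⟩ | ⟨_, hs⟩⟩
  · exact ⟨a, b, c, hca, hcb, (hs.cons x).cons y⟩
  · exact ⟨y, b, c, hca, hcb, (hs.cons x).cons_cons y⟩
  · exact ⟨x, b, c, hca, hcb, (hs.cons_cons x).cons y⟩
  · exact ⟨y, x, c, hcb, hca, (hs.cons_cons x).cons_cons y⟩

theorem hasTwoLargerBefore_cons_cons_of_le {x y : ℕ} {rest : List ℕ} (hxy : x ≤ y) :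
    HasTwoLargerBefore (x :: y :: rest) ↔
      (∃ b ∈ y :: rest, b < x) ∨ HasTwoLargerBefore (y :: rest) := by
  constructor
  · rintro ⟨a, b, c, hca, hcb, hs⟩
    rcases hs with _ | ⟨_, hs⟩ | ⟨_, hs⟩
    · exact .inr ⟨a, b, c, hca, hcb, hs⟩
    · exact .inl ⟨c, hs.subset (by simp), hca⟩
  · rintro (⟨b, hb, hbx⟩ | ⟨a, b, c, hca, hcb, hs⟩)
    · obtain rfl | hb := List.mem_cons.1 hb
      · exact absurd hxy (not_le.2 hbx)
      · exact ⟨x, y, b, hbx, hbx.trans_le hxy,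
          ((List.singleton_sublist.2 hb).cons_cons y).cons_cons x⟩
    · exact ⟨a, b, c, hca, hcb, hs.cons x⟩

theorem hasTwoLargerBefore_cons_cons {x y : ℕ} {rest : List ℕ} :
    HasTwoLargerBefore (x :: y :: rest) ↔
      (∃ b ∈ max x y :: rest, b < min x y) ∨ HasTwoLargerBefore (max x y :: rest) := by
  rcases le_total x y with h | h
  · simpa [h] using hasTwoLargerBefore_cons_cons_of_le h
  · rw [max_eq_left h, min_eq_right h, ← hasTwoLargerBefore_cons_cons_of_le h]
    exact ⟨.swap, .swap⟩

theorem pairwise_le_B_iff (w : List ℕ) :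
    (B w).Pairwise (· ≤ ·) ↔ ¬ HasTwoLargerBefore w := by
  cases w with
  | nil => simp [B, HasTwoLargerBefore]
  | cons x rest =>
    induction rest generalizing x with
    | nil =>
      simp only [B, List.pairwise_singleton, true_iff]
      rintro ⟨a, b, c, -, -, hs⟩
      simpa using hs.length_le
    | cons y rest ih =>
      simp only [B_cons_cons, List.pairwise_cons, ih, hasTwoLargerBefore_cons_cons,
        (B_perm _).mem_iff, not_or, not_exists, not_and, not_lt]

theorem hasTwoLargerBefore_iff_contains231_or_contains321 {w : List ℕ} (hw : w.Nodup) :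
    HasTwoLargerBefore w ↔ Contains231 w ∨ Contains321 w := by
  constructor
  · rintro ⟨a, b, c, hca, hcb, hs⟩
    obtain ⟨i, j, k, hij, hjk, rfl, rfl, rfl⟩ := List.sublist_triple_iff.1 hs
    have hne : w.get i ≠ w.get j := fun h => hij.ne (List.nodup_iff_injective_get.1 hw h)
    rcases hne.lt_or_gt with h | h
    · exact .inl ⟨i, j, k, hij, hjk, hca, h⟩
    · exact .inr ⟨i, j, k, hij, hjk, h, hcb⟩
  · rintro (⟨i, j, k, hij, hjk, hki, hij'⟩ | ⟨i, j, k, hij, hjk, hji, hkj⟩)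
    · exact ⟨_, _, _, hki, hki.trans hij',
        List.sublist_triple_iff.2 ⟨i, j, k, hij, hjk, rfl, rfl, rfl⟩⟩
    · exact ⟨_, _, _, hkj.trans hji, hkj,
        List.sublist_triple_iff.2 ⟨i, j, k, hij, hjk, rfl, rfl, rfl⟩⟩

/-- one pass of bubble-sort sorts `π` iff `π` avoids 231 and 321. -/
theorem bubbleSortable_iff (n : ℕ) (w : List ℕ) (hw : IsPermOf w n) :
    B w = idPerm n ↔ ¬ Contains231 w ∧ ¬ Contains321 w := by
  have hid : (idPerm n).Pairwise (· ≤ ·) := (List.pairwise_lt_range' 1 one_pos).imp le_of_lt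
  have hnd : w.Nodup := hw.nodup_iff.2 List.nodup_range'
  rw [← not_or, ← hasTwoLargerBefore_iff_contains231_or_contains321 hnd, ← pairwise_le_B_iff]
  exact ⟨fun h => h ▸ hid, fun h => ((B_perm w).trans hw).eq_of_pairwise' h hid⟩
end

section
/- If in a permutation π there are positions i < j with π(i) > π(j), and there is no m with i < m < j and π(m) > π(i), then in S(π) the letter π(j) appears before π(i). -/
/-! ### Auxiliary lemmas -/

lemma stackPop_append (x : ℕ) : ∀ s : List ℕ, (stackPop x s).1 ++ (stackPop x s).2 = s
  | [] => rfl
  | t :: ts => by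
    by_cases h : t < x
    · simp [stackPop, h, stackPop_append x ts]
    · simp [stackPop, h]

/-- If `x ≤ a`, popping for `x` never removes `a` (nor anything below it). -/
lemma stackPop_suffix (x a : ℕ) (hxa : ¬ a < x) (s2 : List ℕ) :
    ∀ s1 : List ℕ, ∃ s1', (stackPop x (s1 ++ a :: s2)).2 = s1' ++ a :: s2
  | [] => by
    simp only [List.nil_append, stackPop, hxa, if_neg]
    exact ⟨[], rfl⟩
  | t :: ts => by
    by_cases h : t < x
    · obtain ⟨s1', hs1'⟩ := stackPop_suffix x a hxa s2 ts
      exact ⟨s1', by simp [stackPop, h, hs1']⟩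
    · exact ⟨t :: ts, by simp [stackPop, h]⟩

/-- `stackRun s xs` outputs all of `s` and `xs`. -/
lemma stackRun_perm_s8 : ∀ (xs s : List ℕ), (stackRun s xs).Perm (s ++ xs)
  | [], s => by simp [stackRun]
  | x :: xs, s => by
    have h1 := stackRun_perm_s8 xs (x :: (stackPop x s).2)
    have h2 : (stackRun s (x :: xs)).Perm
        ((stackPop x s).1 ++ (x :: ((stackPop x s).2 ++ xs))) := by
      have : stackRun s (x :: xs) = (stackPop x s).1 ++ stackRun (x :: (stackPop x s).2) xs :=
        rfl
      rw [this]
      exact h1.append_left _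
    have h3 : ((stackPop x s).1 ++ (x :: ((stackPop x s).2 ++ xs))).Perm
        (x :: ((stackPop x s).1 ++ ((stackPop x s).2 ++ xs))) := List.perm_middle
    have h4 : x :: ((stackPop x s).1 ++ ((stackPop x s).2 ++ xs)) = x :: (s ++ xs) := by
      rw [← List.append_assoc, stackPop_append]
    have h5 : (x :: (s ++ xs)).Perm (s ++ x :: xs) := List.perm_middle.symm
    exact ((h2.trans h3).trans (h4 ▸ List.Perm.refl _)).trans h5

/-- Order in the stack is preserved in the eventual output. -/
lemma stackRun_sublist (a b : ℕ) :
    ∀ (xs s : List ℕ), [b, a].Sublist s → [b, a].Sublist (stackRun s xs)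
  | [], s, h => h
  | x :: xs, s, h => by
    have hsplit : s = (stackPop x s).1 ++ (stackPop x s).2 := (stackPop_append x s).symm
    rw [hsplit] at h
    rw [show stackRun s (x :: xs) = (stackPop x s).1 ++ stackRun (x :: (stackPop x s).2) xs
      from rfl]
    rcases List.sublist_append_iff.1 h with ⟨l₁, l₂, heq, h₁, h₂⟩
    rcases l₁ with _ | ⟨b', l₁⟩
    · have hl₂ : [b, a] = l₂ := by simpa using heq
      rw [← hl₂] at h₂
      exact ((stackRun_sublist a b xs _
        (h₂.trans (List.sublist_cons_self _ _)))).trans (List.sublist_append_right _ _)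
    · rcases l₁ with _ | ⟨a', l₁⟩
      · injection heq with h1 h2
        subst h1
        have hl2 : l₂ = [a] := by simpa using h2.symm
        subst hl2
        have ha2 : [a].Sublist (stackRun (x :: (stackPop x s).2) xs) := by
          have hmem : a ∈ stackRun (x :: (stackPop x s).2) xs := by
            refine (stackRun_perm_s8 xs _).mem_iff.2 ?_
            have : a ∈ (stackPop x s).2 := h₂.subset (by simp)
            simp [this]
          simpa using hmem
        exact h₁.append ha2
      · injection heq with h1 h2
        injection h2 with h3 h4
        subst h1; subst h3
        have : l₁ = [] := by
          have := List.append_eq_nil_iff.mp h4.symm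
          exact this.1
        subst this
        exact h₁.trans (List.sublist_append_left _ _)

/-- One step of the run, recording output and final stack. -/
def runOut : List ℕ → List ℕ → List ℕ × List ℕ
  | s, [] => ([], s)
  | s, x :: xs =>
    let p := stackPop x s
    let q := runOut (x :: p.2) xs
    (p.1 ++ q.1, q.2)

lemma stackRun_eq_runOut : ∀ (xs s : List ℕ),
    stackRun s xs = (runOut s xs).1 ++ (runOut s xs).2
  | [], s => rfl
  | x :: xs, s => by
    show (stackPop x s).1 ++ stackRun (x :: (stackPop x s).2) xs = _
    rw [stackRun_eq_runOut xs]
    simp [runOut]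

lemma runOut_append : ∀ (ys zs s : List ℕ),
    runOut s (ys ++ zs) =
      ((runOut s ys).1 ++ (runOut (runOut s ys).2 zs).1, (runOut (runOut s ys).2 zs).2)
  | [], zs, s => by simp [runOut]
  | y :: ys, zs, s => by
    simp only [List.cons_append, runOut, List.append_eq, runOut_append ys zs,
      List.append_assoc]

lemma stackRun_split (ys zs s : List ℕ) :
    stackRun s (ys ++ zs) = (runOut s ys).1 ++ stackRun (runOut s ys).2 zs := by
  rw [stackRun_eq_runOut, runOut_append, stackRun_eq_runOut zs]
  simp

lemma runOut_snoc (s ys : List ℕ) (x : ℕ) :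
    (runOut s (ys ++ [x])).2 = x :: (stackPop x (runOut s ys).2).2 := by
  rw [runOut_append]; rfl

/-- If all inputs are `≤ a`, then `a` (with everything below it) stays in the stack. -/
lemma runOut_keep (a : ℕ) (s2 : List ℕ) :
    ∀ (xs : List ℕ), (∀ x ∈ xs, x ≤ a) → ∀ s1 : List ℕ,
      ∃ s1', (runOut (s1 ++ a :: s2) xs).2 = s1' ++ a :: s2
  | [], _, s1 => ⟨s1, rfl⟩
  | x :: xs, hle, s1 => by
    have hxa : ¬ a < x := not_lt.2 (hle x (by simp))
    obtain ⟨t1, ht1⟩ := stackPop_suffix x a hxa s2 s1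
    obtain ⟨s1', hs1'⟩ := runOut_keep a s2 xs (fun y hy => hle y (by simp [hy])) (x :: t1)
    refine ⟨s1', ?_⟩
    show (runOut (x :: (stackPop x (s1 ++ a :: s2)).2) xs).2 = _
    rw [ht1]
    exact hs1'

lemma sublist_indexOf_lt {l : List ℕ} {a b : ℕ} (hnd : l.Nodup)
    (h : [b, a].Sublist l) : l.idxOf b < l.idxOf a := by
  induction l with
  | nil => simp at h
  | cons c l ih =>
    rw [List.nodup_cons] at hnd
    obtain ⟨hc, hnd⟩ := hnd
    cases h with
    | cons _ h' =>
      have hb : b ∈ l := h'.subset (by simp)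
      have ha : a ∈ l := h'.subset (by simp)
      have hbc : c ≠ b := fun e => hc (e ▸ hb)
      have hac : c ≠ a := fun e => hc (e ▸ ha)
      rw [List.idxOf_cons_ne _ hbc, List.idxOf_cons_ne _ hac]
      exact Nat.succ_lt_succ (ih hnd h')
    | cons_cons _ h' =>
      have ha : a ∈ l := h'.subset (by simp)
      have hab : b ≠ a := by rintro rfl; exact hc ha
      rw [List.idxOf_cons_self, List.idxOf_cons_ne _ hab]
      exact Nat.succ_pos _

/-- if `w i > w j` for positions `i < j` and no letter strictly
between them exceeds `w i`, then in `S w` the letter `w j` precedes `w i`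
(the inversion is destroyed). -/
theorem inversion_destroyed (n : ℕ) (w : List ℕ) (hw : IsPermOf w n)
    (i j : Fin w.length) (hij : i < j) (hval : w.get j < w.get i)
    (hno : ∀ m : Fin w.length, i < m → m < j → ¬ w.get i < w.get m) :
    (S w).idxOf (w.get j) < (S w).idxOf (w.get i) := by
  have hi : (i : ℕ) < w.length := i.isLt
  have hj : (j : ℕ) < w.length := j.isLt
  have hij' : (i : ℕ) < (j : ℕ) := hij
  set a := w.get i with ha
  set b := w.get j with hb
  have hga : w[(i:ℕ)] = a := rfl
  have hgb : w[(j:ℕ)] = b := rfl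
  set u : List ℕ := w.take i with hu
  set mid : List ℕ := (w.drop (i+1)).take (j - (i+1)) with hmid
  set rest : List ℕ := w.drop (j+1) with hrest
  -- the decomposition of w
  have hdec : w = (u ++ [a]) ++ (mid ++ b :: rest) := by
    have h1 : w = u ++ w.drop i := (List.take_append_drop _ _).symm
    have h2 : w.drop (i:ℕ) = a :: w.drop (i+1) := List.drop_eq_getElem_cons hi
    have h3 : w.drop ((i:ℕ)+1) = mid ++ (w.drop (i+1)).drop (j - (i+1)) :=
      (List.take_append_drop _ _).symm
    have h4 : (w.drop ((i:ℕ)+1)).drop ((j:ℕ) - (i+1)) = w.drop (j:ℕ) := by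
      rw [List.drop_drop]
      congr 1
      omega
    have h5 : w.drop (j:ℕ) = b :: rest := List.drop_eq_getElem_cons hj
    rw [h4, h5] at h3
    rw [h1, h2, h3]
    simp
  -- every element of mid is ≤ a
  have hmle : ∀ x ∈ mid, x ≤ a := by
    intro x hx
    rw [List.mem_iff_getElem] at hx
    obtain ⟨t, ht, hxt⟩ := hx
    have ht' : t < (j:ℕ) - ((i:ℕ)+1) := by
      have := ht
      simp [hmid] at this
      omega
    have htlen : (i:ℕ) + 1 + t < w.length := by omega
    have hxw : x = w[(i:ℕ)+1+t] := by
      rw [← hxt]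
      show (List.take ((j:ℕ) - ((i:ℕ)+1)) (List.drop ((i:ℕ)+1) w))[t]'(by
        simpa [hmid] using ht) = _
      rw [List.getElem_take, List.getElem_drop]
    have hkey := hno ⟨(i:ℕ)+1+t, htlen⟩ (by simp [Fin.lt_def]; omega)
      (by simp [Fin.lt_def]; omega)
    simp only [List.get_eq_getElem] at hkey
    rw [hxw]
    exact not_lt.1 hkey
  -- run the machine over the decomposition
  have hstep1 : S w = (runOut [] (u ++ [a])).1 ++ stackRun (runOut [] (u ++ [a])).2
      (mid ++ b :: rest) := by
    rw [S, hdec, stackRun_split]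
  obtain ⟨τ, hτ⟩ : ∃ τ, (runOut [] (u ++ [a])).2 = a :: τ :=
    ⟨_, runOut_snoc [] u a⟩
  have hkeep := runOut_keep a τ mid hmle []
  obtain ⟨s1', hs1'⟩ := hkeep
  have hstep2 : stackRun (a :: τ) (mid ++ b :: rest) =
      (runOut (a :: τ) mid).1 ++ stackRun (s1' ++ a :: τ) (b :: rest) := by
    rw [stackRun_split]
    congr 1
    have : (runOut (a :: τ) mid).2 = s1' ++ a :: τ := by simpa using hs1'
    rw [this]
  obtain ⟨s1'', hs1''⟩ := stackPop_suffix b a (not_lt.2 (le_of_lt hval)) τ s1'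
  have hstep3 : stackRun (s1' ++ a :: τ) (b :: rest) =
      (stackPop b (s1' ++ a :: τ)).1 ++ stackRun (b :: (s1'' ++ a :: τ)) rest := by
    rw [show stackRun (s1' ++ a :: τ) (b :: rest) =
        (stackPop b (s1' ++ a :: τ)).1 ++
          stackRun (b :: (stackPop b (s1' ++ a :: τ)).2) rest from rfl, hs1'']
  -- the key sublist fact
  have hsub : [b, a].Sublist (S w) := by
    rw [hstep1, hτ, hstep2, hstep3]
    have hba : [b, a].Sublist (b :: (s1'' ++ a :: τ)) := by
      refine List.Sublist.cons₂ b ?_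
      have : a ∈ s1'' ++ a :: τ := by simp
      simp only [List.singleton_sublist]
      exact this
    have := stackRun_sublist a b rest _ hba
    exact (this.trans (List.sublist_append_right _ _)).trans
      ((List.sublist_append_right _ _).trans ((List.sublist_append_right _ _)))
  -- nodup of S w
  have hnd : (S w).Nodup := by
    have h1 : (S w).Perm w := by simpa [S] using stackRun_perm_s8 w []
    exact h1.nodup_iff.2 (hw.nodup_iff.2 (List.nodup_range' (s := 1) (n := n)))
  exact sublist_indexOf_lt hnd hsub
end

section
/- If π(i) > π(j) for positions i < j and there exists a position m with i < m < j such that π(m) > π(i), then in S(π) the letter π(i) still appears before the letter π(j) (the inversion is preserved as a pair of values in that order). -/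
/-!
When the letter `w m` is pushed, every smaller letter still on the stack is popped first, so
`w i < w m` with `i < m` forces `w i` to be output before `w m` is even pushed, whereas `w j`
with `j > m` cannot be output before it has been read.
-/

/-- `stackRun` without the final flush: the output so far and the current stack. -/
def stackFeed : List ℕ → List ℕ → List ℕ × List ℕ
  | st, [] => ([], st)
  | st, x :: xs =>
    let p := stackPop x st
    let q := stackFeed (x :: p.2) xs
    (p.1 ++ q.1, q.2)

section StackPop

variable (x : ℕ) {st : List ℕ}

theorem stackPop_fst_append_snd (st : List ℕ) : (stackPop x st).1 ++ (stackPop x st).2 = st := by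
  induction st with
  | nil => rfl
  | cons t ts ih =>
    by_cases h : t < x
    · simp [stackPop, h, ih]
    · simp [stackPop, h]

theorem le_of_mem_stackPop_snd (hst : st.Pairwise (· ≤ ·)) :
    ∀ y ∈ (stackPop x st).2, x ≤ y := by
  induction st with
  | nil => simp [stackPop]
  | cons t ts ih =>
    rw [List.pairwise_cons] at hst
    by_cases h : t < x
    · simpa only [stackPop, if_pos h] using ih hst.2
    · simp only [stackPop, if_neg h, List.mem_cons, forall_eq_or_imp]
      exact ⟨by omega, fun y hy => (Nat.le_of_not_lt h).trans (hst.1 y hy)⟩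

theorem pairwise_stackPop_snd (hst : st.Pairwise (· ≤ ·)) :
    (stackPop x st).2.Pairwise (· ≤ ·) := by
  induction st with
  | nil => simp [stackPop]
  | cons t ts ih =>
    by_cases h : t < x
    · simpa only [stackPop, if_pos h] using ih (List.pairwise_cons.mp hst).2
    · simpa only [stackPop, if_neg h] using hst

theorem pairwise_cons_stackPop_snd (hst : st.Pairwise (· ≤ ·)) :
    (x :: (stackPop x st).2).Pairwise (· ≤ ·) :=
  List.pairwise_cons.mpr ⟨le_of_mem_stackPop_snd x hst, pairwise_stackPop_snd x hst⟩

end StackPop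

section StackFeed

theorem pairwise_stackFeed_snd (u : List ℕ) {st : List ℕ} (hst : st.Pairwise (· ≤ ·)) :
    (stackFeed st u).2.Pairwise (· ≤ ·) := by
  induction u generalizing st with
  | nil => exact hst
  | cons x xs ih => exact ih (pairwise_cons_stackPop_snd x hst)

open List in
theorem stackFeed_perm (st u : List ℕ) :
    ((stackFeed st u).1 ++ (stackFeed st u).2).Perm (st ++ u) := by
  induction u generalizing st with
  | nil => simp [stackFeed]
  | cons x xs ih =>
    simp only [stackFeed, List.append_assoc]
    calc (stackPop x st).1 ++ ((stackFeed (x :: (stackPop x st).2) xs).1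
            ++ (stackFeed (x :: (stackPop x st).2) xs).2)
        _ ~ (stackPop x st).1 ++ (x :: (stackPop x st).2 ++ xs) := (ih _).append_left _
        _ ~ x :: ((stackPop x st).1 ++ (stackPop x st).2 ++ xs) := by simp
        _ = x :: (st ++ xs) := by rw [stackPop_fst_append_snd]
        _ ~ st ++ x :: xs := List.perm_middle.symm

theorem stackRun_append (st u v : List ℕ) :
    stackRun st (u ++ v) = (stackFeed st u).1 ++ stackRun (stackFeed st u).2 v := by
  induction u generalizing st with
  | nil => rfl
  | cons x xs ih => simp only [List.cons_append, stackRun, stackFeed, ih, List.append_assoc]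

theorem stackFeed_concat_snd (st u : List ℕ) (x : ℕ) :
    (stackFeed st (u ++ [x])).2 = x :: (stackPop x (stackFeed st u).2).2 := by
  induction u generalizing st with
  | nil => rfl
  | cons y ys ih => exact ih _

theorem le_of_mem_stackFeed_concat_snd {st : List ℕ} (u : List ℕ) (x : ℕ)
    (hst : st.Pairwise (· ≤ ·)) : ∀ y ∈ (stackFeed st (u ++ [x])).2, x ≤ y := by
  rw [stackFeed_concat_snd, List.forall_mem_cons]
  exact ⟨le_rfl, le_of_mem_stackPop_snd x (pairwise_stackFeed_snd u hst)⟩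

theorem mem_stackFeed_concat_fst_of_lt {st u : List ℕ} {a x : ℕ} (hst : st.Pairwise (· ≤ ·))
    (ha : a ∈ st ++ u) (hax : a < x) : a ∈ (stackFeed st (u ++ [x])).1 := by
  have hmem : a ∈ (stackFeed st (u ++ [x])).1 ++ (stackFeed st (u ++ [x])).2 :=
    (stackFeed_perm st _).mem_iff.mpr (by rw [← List.append_assoc]; exact List.mem_append_left _ ha)
  rcases List.mem_append.mp hmem with h | h
  · exact h
  · exact absurd (le_of_mem_stackFeed_concat_snd u x hst a h) (by omega)

end StackFeed

theorem idxOf_S_lt_idxOf_S (u v : List ℕ) {a b c : ℕ} (ha : a ∈ u) (hac : a < c)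
    (hb : b ∉ u ++ [c]) : (S (u ++ c :: v)).idxOf a < (S (u ++ c :: v)).idxOf b := by
  set O := (stackFeed [] (u ++ [c])).1
  have hS : S (u ++ c :: v) = O ++ stackRun (stackFeed [] (u ++ [c])).2 v := by
    rw [S, ← stackRun_append]; simp
  have haO : a ∈ O := mem_stackFeed_concat_fst_of_lt List.Pairwise.nil (by simpa) hac
  have hbO : b ∉ O := fun h =>
    hb (by simpa using (stackFeed_perm [] (u ++ [c])).subset (List.mem_append_left _ h))
  rw [hS, List.idxOf_append_of_mem haO, List.idxOf_append_of_notMem hbO]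
  exact (List.idxOf_lt_length_iff.mpr haO).trans_le (Nat.le_add_right _ _)

theorem inversion_preserved_general (n : ℕ) (w : List ℕ) (hw : IsPermOf w n)
    (i j : Fin w.length)
    (m : Fin w.length) (him : i < m) (hmj : m < j) (hm : w.get i < w.get m) :
    (S w).idxOf (w.get i) < (S w).idxOf (w.get j) := by
  have hnd : w.Nodup := hw.nodup_iff.mpr List.nodup_range'
  have hsplit : w = w.take m ++ w.get m :: w.drop (m + 1) := by
    conv_lhs => rw [← List.take_append_drop m w, List.drop_eq_getElem_cons m.2]
    rfl
  have hi : w.get i ∈ w.take m := by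
    simpa [List.mem_take_iff_getElem] using ⟨i, by omega, rfl⟩
  have hj : w.get j ∉ w.take m ++ [w.get m] := by
    simp only [List.get_eq_getElem]
    rw [List.take_append_getElem m.2]
    refine fun h => List.disjoint_take_drop hnd le_rfl h ?_
    simpa [List.mem_drop_iff_getElem] using ⟨j - (m + 1), by omega, by congr 1; omega⟩
  have := idxOf_S_lt_idxOf_S (w.take m) (w.drop (m + 1)) hi hm hj
  rwa [← hsplit] at this

/-- if `w i > w j` for positions `i < j` and some letter strictly
between them exceeds `w i`, then in `S w` the letter `w i` still precedes
`w j` (the inversion is preserved). -/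
theorem inversion_preserved (n : ℕ) (w : List ℕ) (hw : IsPermOf w n)
    (i j : Fin w.length) (hij : i < j) (hval : w.get j < w.get i)
    (m : Fin w.length) (him : i < m) (hmj : m < j) (hm : w.get i < w.get m) :
    (S w).idxOf (w.get i) < (S w).idxOf (w.get j) :=
  inversion_preserved_general n w hw i j m him hmj hm
end

section
/- The two mesh patterns (3241, {(1,3),(1,4)}) and (3241, {(1,4)}) are avoidance-equivalent: a permutation contains an occurrence of one if and only if it contains an occurrence of the other. -/
/-- `w` contains the mesh pattern (3241, {(1,3),(1,4)}): an occurrence of 3241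
at positions `i<j<k<l` (so `w l < w k < w i < w j`) such that no letter
strictly between positions `i` and `j` lies strictly between `w i` and `w j`
in value (box (1,3)) or above `w j` (box (1,4)). -/
def ContainsMesh3241Two (w : List ℕ) : Prop :=
  ∃ i j k l : Fin w.length, i < j ∧ j < k ∧ k < l ∧
    w.get l < w.get k ∧ w.get k < w.get i ∧ w.get i < w.get j ∧
    (∀ m : Fin w.length, i < m → m < j →
      ¬ (w.get i < w.get m ∧ w.get m < w.get j)) ∧
    (∀ m : Fin w.length, i < m → m < j → ¬ w.get j < w.get m)

/-- `w` contains the mesh pattern (3241, {(1,4)}). -/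
def ContainsMesh3241One (w : List ℕ) : Prop :=
  ∃ i j k l : Fin w.length, i < j ∧ j < k ∧ k < l ∧
    w.get l < w.get k ∧ w.get k < w.get i ∧ w.get i < w.get j ∧
    (∀ m : Fin w.length, i < m → m < j → ¬ w.get j < w.get m)

/-- the mesh patterns (3241, {(1,3),(1,4)}) and (3241, {(1,4)})
are avoidance-equivalent. -/
theorem mesh3241_equivalent (n : ℕ) (w : List ℕ) (hw : IsPermOf w n) :
    ContainsMesh3241Two w ↔ ContainsMesh3241One w := by
  constructor
  · rintro ⟨i, j, k, l, h1, h2, h3, h4, h5, h6, _, h8⟩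
    exact ⟨i, j, k, l, h1, h2, h3, h4, h5, h6, h8⟩
  · rintro ⟨i, j, k, l, h1, h2, h3, h4, h5, h6, h7⟩
    by_cases hc : ∃ m : Fin w.length,
        i < m ∧ m < j ∧ w.get i < w.get m ∧ w.get m < w.get j
    · obtain ⟨m, hm, hmax⟩ := Finset.exists_max_image
        (Finset.univ.filter fun m : Fin w.length =>
          i < m ∧ m < j ∧ w.get i < w.get m ∧ w.get m < w.get j)
        w.get (by
          obtain ⟨m, hm⟩ := hc
          exact ⟨m, by simpa using hm⟩)
      simp only [Finset.mem_filter, Finset.mem_univ, true_and] at hm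
      obtain ⟨hm1, hm2, hm3, hm4⟩ := hm
      refine ⟨m, j, k, l, hm2, h2, h3, h4, lt_trans h5 hm3, hm4, ?_, ?_⟩
      · intro m' hma hmb ⟨ha, hb⟩
        have : w.get m' ≤ w.get m := hmax m' (by
          simp only [Finset.mem_filter, Finset.mem_univ, true_and]
          exact ⟨lt_trans hm1 hma, hmb, lt_trans hm3 ha, hb⟩)
        exact absurd ha (not_lt.mpr this)
      · intro m' hma hmb
        exact h7 m' (lt_trans hm1 hma) hmb
    · refine ⟨i, j, k, l, h1, h2, h3, h4, h5, h6, ?_, h7⟩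
      intro m hma hmb ⟨ha, hb⟩
      exact hc ⟨m, hma, hmb, ha, hb⟩
end
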